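/- Let m, n, p, q ∈ ℕ with 1 ≤ m < n, 1 ≤ p < q and n − m = q − p =: g, and assume g ≠ m + p. Let α, β, γ, δ ∈ ℂ, and set φ(z) := α z^n + β z^m + γ z̄^p + δ z̄^q. For every k ∈ ℕ with k ≥ max{n, q}, setting ℓ := k + g, one has Σ_{j=0}^∞ (j+1)·( ∫_𝔻 φ(z) z^ℓ · conj(z^j) dA )·conj( ∫_𝔻 φ(z) z^k · conj(z^j) dA ) − Σ_{j=0}^∞ (j+1)·( ∫_𝔻 conj(φ(z)) z^ℓ · conj(z^j) dA )·conj( ∫_𝔻 conj(φ(z)) z^k · conj(z^j) dA ) = conj(α)·β·m·n/((k+1)(ℓ+1)(ℓ+m+1)) − conj(γ)·δ·p·q/((k+1)(ℓ+1)(ℓ+p+1)). (The left-hand side equals ⟨[T_φ*, T_φ] z^ℓ, z^k⟩ = ⟨P(φ z^ℓ), P(φ z^k)⟩ − ⟨P(φ̄ z^ℓ), P(φ̄ z^k)⟩ for the Toeplitz operator T_φ on the Bergman space.) -/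

import Mathlib

open MeasureTheory Complex Metric

/-- The normalized area measure on the open unit disk `𝔻 ⊆ ℂ`. -/
noncomputable def dA : Measure ℂ :=
  (ENNReal.ofReal (Real.pi)⁻¹) • (volume.restrict (ball (0 : ℂ) 1))

/-!
In polar coordinates `∫ z^a z̄^b dA = δ_{ab} / (a + 1)`, so the `j`-th Bergman coefficient
`⟨z^a z̄^b, z^j⟩` is `1 / (a + 1)` when `a = b + j` and `0` otherwise. Each coefficient of
`φ z^ℓ`, `φ z^k`, `φ̄ z^ℓ`, `φ̄ z^k` is therefore a sum of four Kronecker deltas, the two series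
are finite sums, and only matching degrees contribute. With `ℓ = k + g` the matches are
`m + ℓ = n + k`, `ℓ - q = k - p` for `φ` and `ℓ - n = k - m`, `ℓ + p = k + q` for `φ̄`;
the hypothesis `g ≠ m + p` excludes the only other candidates `ℓ - p = k + m` and
`ℓ - m = k + p`. The `α, β` terms then give
`1 / (ℓ + m + 1) - (k - m + 1) / ((k + 1) (ℓ + 1)) = m n / ((k + 1) (ℓ + 1) (ℓ + m + 1))`,
and the `γ, δ` terms the same with `p, q` in place of `m, n`.
-/

open scoped Real ComplexConjugate

theorem integral_exp_int_mul_I (n : ℤ) :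
    ∫ θ in -π..π, exp (n * θ * I) = if n = 0 then ((2 * π : ℝ) : ℂ) else 0 := by
  split_ifs with hn
  · simp [hn]
    ring
  · have hc : (n : ℂ) * I ≠ 0 := mul_ne_zero (by exact_mod_cast hn) I_ne_zero
    have hper : exp (n * I * π) = exp (n * I * (-π : ℝ)) := by
      rw [exp_eq_exp_iff_exists_int]
      exact ⟨n, by push_cast; ring⟩
    simp_rw [mul_right_comm _ _ I]
    rw [integral_exp_mul_complex hc, hper, sub_self, zero_div]

theorem integral_zero_one_ofReal_pow (N : ℕ) :
    ∫ r in (0 : ℝ)..1, (r : ℂ) ^ N = 1 / (N + 1) := by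
  simp_rw [← ofReal_pow]
  rw [intervalIntegral.integral_ofReal, integral_pow]
  push_cast; ring

theorem polarCoord_symm_pow_mul_conj_pow (a b : ℕ) (p : ℝ × ℝ) :
    (Complex.polarCoord.symm p) ^ a * conj (Complex.polarCoord.symm p) ^ b
      = (p.1 : ℂ) ^ (a + b) * exp (((a : ℤ) - b : ℤ) * p.2 * I) := by
  have hz : Complex.polarCoord.symm p = p.1 * exp (p.2 * I) := by
    rw [Complex.polarCoord_symm_apply, exp_mul_I, ← ofReal_cos, ← ofReal_sin]
  have hconj : conj (Complex.polarCoord.symm p) = p.1 * exp (-(p.2 * I)) := by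
    rw [hz, map_mul, conj_ofReal, ← exp_conj, map_mul, conj_ofReal, conj_I, mul_neg]
  have hexp : (((a : ℤ) - b : ℤ) : ℂ) * p.2 * I = a * (p.2 * I) + b * -(p.2 * I) := by
    push_cast
    ring
  rw [hconj, hz, mul_pow, mul_pow, ← exp_nat_mul, ← exp_nat_mul, hexp, exp_add, pow_add]
  ring

theorem setIntegral_ball_pow_mul_conj_pow (a b : ℕ) :
    ∫ z in ball (0 : ℂ) 1, z ^ a * conj z ^ b
      = ∫ p in Set.Ioo (0 : ℝ) 1 ×ˢ Set.Ioo (-π) π,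
          (p.1 : ℂ) ^ (a + b + 1) * exp (((a : ℤ) - b : ℤ) * p.2 * I) := by
  rw [← integral_indicator measurableSet_ball, ← Complex.integral_comp_polarCoord_symm,
    polarCoord_target, ← integral_indicator (measurableSet_Ioi.prod measurableSet_Ioo),
    ← integral_indicator (measurableSet_Ioo.prod measurableSet_Ioo)]
  congr 1 with p
  by_cases hp : p ∈ Set.Ioi (0 : ℝ) ×ˢ Set.Ioo (-π) π
  · obtain ⟨hr, hθ⟩ := hp
    have hball : Complex.polarCoord.symm p ∈ ball (0 : ℂ) 1 ↔ p.1 < 1 := by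
      simp [abs_of_pos (show 0 < p.1 from hr)]
    rw [Set.indicator_of_mem (show p ∈ Set.Ioi 0 ×ˢ Set.Ioo (-π) π from ⟨hr, hθ⟩)]
    by_cases h1 : p.1 < 1
    · rw [Set.indicator_of_mem (hball.2 h1), Set.indicator_of_mem
        (show p ∈ Set.Ioo 0 1 ×ˢ Set.Ioo (-π) π from ⟨⟨hr, h1⟩, hθ⟩),
        polarCoord_symm_pow_mul_conj_pow, real_smul, pow_succ]
      ring
    · rw [Set.indicator_of_notMem (mt hball.1 h1), Set.indicator_of_notMem, smul_zero]
      exact fun h => h1 h.1.2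
  · rw [Set.indicator_of_notMem hp, Set.indicator_of_notMem]
    exact fun h => hp ⟨Set.Ioo_subset_Ioi_self h.1, h.2⟩

theorem integral_pow_mul_conj_pow (a b : ℕ) :
    ∫ z, z ^ a * conj z ^ b ∂dA = if a = b then 1 / ((a : ℂ) + 1) else 0 := by
  rw [dA, integral_smul_measure, setIntegral_ball_pow_mul_conj_pow, Measure.volume_eq_prod,
    setIntegral_prod_mul (fun r : ℝ => (r : ℂ) ^ (a + b + 1))
      (fun θ : ℝ => exp (((a : ℤ) - b : ℤ) * θ * I)),
    ← integral_Ioc_eq_integral_Ioo, ← integral_Ioc_eq_integral_Ioo,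
    ← intervalIntegral.integral_of_le zero_le_one,
    ← intervalIntegral.integral_of_le (by linarith [Real.pi_pos]),
    integral_zero_one_ofReal_pow, integral_exp_int_mul_I, ENNReal.toReal_ofReal (by positivity)]
  simp only [sub_eq_zero, Nat.cast_inj]
  split_ifs with hab
  · subst hab
    have : (a : ℂ) + 1 ≠ 0 := Nat.cast_add_one_ne_zero a
    rw [real_smul, show ((a + a + 1 : ℕ) : ℂ) + 1 = 2 * (a + 1) by push_cast; ring]
    push_cast
    field_simp
  · simp

theorem integrable_pow_mul_conj_pow (a b : ℕ) :
    Integrable (fun z : ℂ => z ^ a * conj z ^ b) dA :=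
  Integrable.smul_measure
    ((((continuous_pow a).mul (continuous_conj.pow b)).continuousOn.integrableOn_compact
      (isCompact_closedBall 0 1)).mono_set ball_subset_closedBall) ENNReal.ofReal_ne_top

section MixedPolynomial

variable {ι : Type*} (s : Finset ι)

theorem conj_sum_mul_pow_mul_conj_pow (c : ι → ℂ) (a b : ι → ℕ) (z : ℂ) :
    conj (∑ i ∈ s, c i * z ^ a i * conj z ^ b i)
      = ∑ i ∈ s, conj (c i) * z ^ b i * conj z ^ a i := by
  simp only [map_sum, map_mul, map_pow, conj_conj, mul_right_comm]

theorem integral_sum_mul_pow_mul_conj_pow (c : ι → ℂ) (a b : ι → ℕ) (u v : ℕ) :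
    ∫ z, (∑ i ∈ s, c i * z ^ a i * conj z ^ b i) * z ^ u * conj (z ^ v) ∂dA
      = ∑ i ∈ s, if a i + u = b i + v then c i / (((a i + u : ℕ) : ℂ) + 1) else 0 := by
  have hsum : ∀ z : ℂ, (∑ i ∈ s, c i * z ^ a i * conj z ^ b i) * z ^ u * conj (z ^ v)
      = ∑ i ∈ s, c i * (z ^ (a i + u) * conj z ^ (b i + v)) := by
    intro z
    rw [Finset.sum_mul, Finset.sum_mul]
    refine Finset.sum_congr rfl fun i _ => ?_
    rw [map_pow]
    ring
  simp_rw [hsum]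
  rw [integral_finsetSum _ fun i _ => (integrable_pow_mul_conj_pow _ _).const_mul _]
  refine Finset.sum_congr rfl fun i _ => ?_
  rw [integral_const_mul, integral_pow_mul_conj_pow, mul_ite, mul_zero, mul_one_div]

theorem hasSum_ite_eq_add_and_eq_add (A B A' B' : ℕ) (f : ℕ → ℂ) :
    HasSum (fun j => if A = B + j ∧ A' = B' + j then f j else 0)
      (if B ≤ A ∧ A + B' = A' + B then f (A - B) else 0) := by
  convert hasSum_ite_eq (A - B) (if B ≤ A ∧ A + B' = A' + B then f (A - B) else 0)
    using 2 with j
  split_ifs <;> first | rfl | omega | congr 1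

theorem tsum_add_one_mul_sum_ite_mul_conj_sum_ite {κ : Type*} (t : Finset κ)
    (A B : ι → ℕ) (A' B' : κ → ℕ) (x : ι → ℂ) (y : κ → ℂ) :
    ∑' j : ℕ, ((j : ℂ) + 1) * (∑ i ∈ s, if A i = B i + j then x i else 0)
        * conj (∑ i ∈ t, if A' i = B' i + j then y i else 0)
      = ∑ i ∈ s, ∑ i' ∈ t, if B i ≤ A i ∧ A i + B' i' = A' i' + B i
          then ((A i : ℂ) - B i + 1) * x i * conj (y i') else 0 := by
  have hterm : ∀ j : ℕ, ((j : ℂ) + 1) * (∑ i ∈ s, if A i = B i + j then x i else 0)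
        * conj (∑ i ∈ t, if A' i = B' i + j then y i else 0)
      = ∑ i ∈ s, ∑ i' ∈ t, if A i = B i + j ∧ A' i' = B' i' + j
          then ((j : ℂ) + 1) * x i * conj (y i') else 0 := by
    intro j
    rw [map_sum, mul_assoc, Finset.sum_mul_sum, Finset.mul_sum]
    refine Finset.sum_congr rfl fun i _ => ?_
    rw [Finset.mul_sum]
    refine Finset.sum_congr rfl fun i' _ => ?_
    split_ifs <;> simp_all [mul_assoc]
  simp_rw [hterm]
  refine (hasSum_sum fun i _ => hasSum_sum fun i' _ =>
    hasSum_ite_eq_add_and_eq_add _ _ _ _ _).tsum_eq.trans ?_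
  refine Finset.sum_congr rfl fun i _ => Finset.sum_congr rfl fun i' _ => ?_
  split_ifs with h
  · push_cast [h.1]
    ring
  · rfl

end MixedPolynomial

theorem statement5_general (m n p q g : ℕ) (hp : 1 ≤ p) (hpq : p < q)
    (hg1 : n - m = g) (hg2 : q - p = g) (hgmp : g ≠ m + p)
    (α β γ δ : ℂ) (φ : ℂ → ℂ)
    (hφ : ∀ z : ℂ, φ z = α * z ^ n + β * z ^ m
        + γ * (starRingEnd ℂ z) ^ p + δ * (starRingEnd ℂ z) ^ q)
    (k : ℕ) (hk : max n q ≤ k) :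
    (∑' j : ℕ, ((j : ℂ) + 1)
        * (∫ z : ℂ, φ z * z ^ (k + g) * (starRingEnd ℂ (z ^ j)) ∂dA)
        * (starRingEnd ℂ (∫ z : ℂ, φ z * z ^ k * (starRingEnd ℂ (z ^ j)) ∂dA)))
      - (∑' j : ℕ, ((j : ℂ) + 1)
        * (∫ z : ℂ, (starRingEnd ℂ (φ z)) * z ^ (k + g) * (starRingEnd ℂ (z ^ j)) ∂dA)
        * (starRingEnd ℂ
            (∫ z : ℂ, (starRingEnd ℂ (φ z)) * z ^ k * (starRingEnd ℂ (z ^ j)) ∂dA)))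
    = (starRingEnd ℂ α) * β * (m : ℂ) * (n : ℂ)
        / (((k : ℂ) + 1) * ((k : ℂ) + (g : ℂ) + 1) * ((k : ℂ) + (g : ℂ) + (m : ℂ) + 1))
      - (starRingEnd ℂ γ) * δ * (p : ℂ) * (q : ℂ)
        / (((k : ℂ) + 1) * ((k : ℂ) + (g : ℂ) + 1) * ((k : ℂ) + (g : ℂ) + (p : ℂ) + 1)) := by
  obtain rfl : n = m + g := by omega
  obtain rfl : q = p + g := by omega
  obtain rfl : φ = fun z => ∑ i : Fin 4,
      ![α, β, γ, δ] i * z ^ ![m + g, m, 0, 0] i * conj z ^ ![0, 0, p, p + g] i := by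
    funext z
    simp [hφ, Fin.sum_univ_four]
  simp only [conj_sum_mul_pow_mul_conj_pow, integral_sum_mul_pow_mul_conj_pow,
    tsum_add_one_mul_sum_ite_mul_conj_sum_ite]
  simp only [Fin.sum_univ_four]
  -- `![⋯] i` is reduced only inside the discharger: reducing it in the goal first would leave
  -- the `Decidable` instances of the `ite`s mentioning the unreduced exponents.
  simp (disch := (simp only [Matrix.cons_val]; omega)) only [if_pos, if_neg]
  simp only [Matrix.cons_val, map_div₀, conj_conj, map_natCast, map_add, map_one, add_zero,
    zero_add]
  field_simp (disch := (norm_cast <;> omega))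
  push_cast
  ring

/-- The off-diagonal entry A₁₀ = ⟨[T_φ*, T_φ] z^ℓ, z^k⟩ with ℓ = k + g, where
g = n - m = q - p and g ≠ m + p, for φ = α z^n + β z^m + γ z̄^p + δ z̄^q. -/
theorem statement5 (m n p q g : ℕ) (hm : 1 ≤ m) (hmn : m < n) (hp : 1 ≤ p) (hpq : p < q)
    (hg1 : n - m = g) (hg2 : q - p = g) (hgmp : g ≠ m + p)
    (α β γ δ : ℂ) (φ : ℂ → ℂ)
    (hφ : ∀ z : ℂ, φ z = α * z ^ n + β * z ^ m
        + γ * (starRingEnd ℂ z) ^ p + δ * (starRingEnd ℂ z) ^ q)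
    (k : ℕ) (hk : max n q ≤ k) :
    (∑' j : ℕ, ((j : ℂ) + 1)
        * (∫ z : ℂ, φ z * z ^ (k + g) * (starRingEnd ℂ (z ^ j)) ∂dA)
        * (starRingEnd ℂ (∫ z : ℂ, φ z * z ^ k * (starRingEnd ℂ (z ^ j)) ∂dA)))
      - (∑' j : ℕ, ((j : ℂ) + 1)
        * (∫ z : ℂ, (starRingEnd ℂ (φ z)) * z ^ (k + g) * (starRingEnd ℂ (z ^ j)) ∂dA)
        * (starRingEnd ℂ
            (∫ z : ℂ, (starRingEnd ℂ (φ z)) * z ^ k * (starRingEnd ℂ (z ^ j)) ∂dA)))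
    = (starRingEnd ℂ α) * β * (m : ℂ) * (n : ℂ)
        / (((k : ℂ) + 1) * ((k : ℂ) + (g : ℂ) + 1) * ((k : ℂ) + (g : ℂ) + (m : ℂ) + 1))
      - (starRingEnd ℂ γ) * δ * (p : ℂ) * (q : ℂ)
        / (((k : ℂ) + 1) * ((k : ℂ) + (g : ℂ) + 1) * ((k : ℂ) + (g : ℂ) + (p : ℂ) + 1)) :=
  statement5_general m n p q g hp hpq hg1 hg2 hgmp α β γ δ φ hφ k hk
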